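/- For all real numbers a and b, kl(p_a‖p_b) + kl(p_b‖p_a) ≤ (a−b)², where p_a = 1/(1+e^a) and p_b = 1/(1+e^b). -/

import Mathlib

/-!
Write `p_a = σ(-a)` with the logistic function `σ`. The symmetrised divergence
`kl(p‖q) + kl(q‖p)` equals `(p - q)(logit p - logit q)`, and `logit ∘ σ = id`, so the sum is
`(σ(-a) - σ(-b))(b - a)`. Since `σ' = σ(1 - σ) ≤ 1/4`, this is at most `(a - b)² / 4`.
-/

noncomputable def klBer (p q : ℝ) : ℝ :=
  p * Real.log (p / q) + (1 - p) * Real.log ((1 - p) / (1 - q))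

open Real Set

theorem one_div_one_add_exp (x : ℝ) : 1 / (1 + exp x) = sigmoid (-x) := by
  rw [sigmoid_def, neg_neg, one_div]

theorem Real.log_sigmoid_div_one_sub_sigmoid (x : ℝ) :
    log (sigmoid x / (1 - sigmoid x)) = x := by
  rw [← sigmoid_neg, ← sigmoid_mul_rexp_neg, div_mul_cancel_left₀ (sigmoid_pos x).ne', exp_neg,
    inv_inv, log_exp]

theorem Real.lipschitzWith_sigmoid : LipschitzWith 4⁻¹ sigmoid := by
  refine lipschitzWith_of_nnnorm_deriv_le differentiable_sigmoid fun x ↦ ?_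
  have hs := sigmoid_pos x
  have hs' := sigmoid_lt_one x
  rw [deriv_sigmoid, ← NNReal.coe_le_coe, coe_nnnorm, norm_of_nonneg (by nlinarith)]
  push_cast
  nlinarith [sq_nonneg (sigmoid x - 2⁻¹)]

theorem klBer_add_klBer_swap {p q : ℝ} (hp : p ∈ Ioo 0 1) (hq : q ∈ Ioo 0 1) :
    klBer p q + klBer q p = (p - q) * (log (p / (1 - p)) - log (q / (1 - q))) := by
  obtain ⟨hp₀, hp₁⟩ := hp
  obtain ⟨hq₀, hq₁⟩ := hq
  have hp' : 1 - p ≠ 0 := (sub_pos.2 hp₁).ne'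
  have hq' : 1 - q ≠ 0 := (sub_pos.2 hq₁).ne'
  simp only [klBer, log_div hp₀.ne' hq₀.ne', log_div hq₀.ne' hp₀.ne', log_div hp' hq',
    log_div hq' hp', log_div hp₀.ne' hp', log_div hq₀.ne' hq']
  ring

theorem klBer_sigmoid_add_klBer_sigmoid (x y : ℝ) :
    klBer (sigmoid x) (sigmoid y) + klBer (sigmoid y) (sigmoid x)
      = (sigmoid x - sigmoid y) * (x - y) := by
  rw [klBer_add_klBer_swap ⟨sigmoid_pos x, sigmoid_lt_one x⟩ ⟨sigmoid_pos y, sigmoid_lt_one y⟩,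
    log_sigmoid_div_one_sub_sigmoid, log_sigmoid_div_one_sub_sigmoid]

theorem klBer_add_klBer_le_sq (a b : ℝ) :
    klBer (1 / (1 + Real.exp a)) (1 / (1 + Real.exp b))
      + klBer (1 / (1 + Real.exp b)) (1 / (1 + Real.exp a)) ≤ (a - b)^2 := by
  rw [one_div_one_add_exp, one_div_one_add_exp, klBer_sigmoid_add_klBer_sigmoid]
  have hlip := lipschitzWith_sigmoid.dist_le_mul (-a) (-b)
  rw [dist_eq, dist_eq] at hlip
  calc (sigmoid (-a) - sigmoid (-b)) * (-a - -b)
      ≤ |sigmoid (-a) - sigmoid (-b)| * |-a - -b| := by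
        rw [← abs_mul]; exact le_abs_self _
    _ ≤ 4⁻¹ * |-a - -b| * |-a - -b| := by gcongr; exact_mod_cast hlip
    _ ≤ (a - b) ^ 2 := by
        rw [mul_assoc, ← sq, sq_abs]; nlinarith [sq_nonneg (a - b)]
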